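/- arXiv:2508.09406 — 4 statements merged into one kernel-verified Lean document; each statement's English description precedes it below -/
import Mathlib

section
/- Let X be a finite subset of ℝ and ε > 0. For every facet F of the Vietoris–Rips complex VR_ε(X) (a maximal simplex, i.e., a maximal subset of X of diameter at most ε), if G is another facet with min(G) = min(F), then G = F. Hence facets are uniquely determined by their minimal elements. -/
/-- A simplex of the Vietoris–Rips complex `VR_ε(X)` on a finite set `X ⊆ ℝ`:
a nonempty subset of `X` of diameter at most `ε`. -/
def IsVRSimplex (X : Finset ℝ) (ε : ℝ) (σ : Finset ℝ) : Prop :=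
  σ.Nonempty ∧ σ ⊆ X ∧ ∀ x ∈ σ, ∀ y ∈ σ, |x - y| ≤ ε

/-- A facet of `VR_ε(X)`: a maximal simplex. -/
def IsVRFacet (X : Finset ℝ) (ε : ℝ) (σ : Finset ℝ) : Prop :=
  IsVRSimplex X ε σ ∧ ∀ τ, IsVRSimplex X ε τ → σ ⊆ τ → τ = σ

/-- A facet equals the interval slab determined by its minimum. -/
lemma facet_eq_slab (X : Finset ℝ) (ε : ℝ) (hε : 0 < ε)
    (F : Finset ℝ) (hF : IsVRFacet X ε F) :
    F = X.filter (fun x => F.min' hF.1.1 ≤ x ∧ x ≤ F.min' hF.1.1 + ε) := by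
  obtain ⟨⟨hne, hsub, hdiam⟩, hmax⟩ := hF
  set m := F.min' hne with hm
  have hmF : m ∈ F := F.min'_mem hne
  have hS : IsVRSimplex X ε (X.filter (fun x => m ≤ x ∧ x ≤ m + ε)) := by
    refine ⟨⟨m, ?_⟩, Finset.filter_subset _ _, ?_⟩
    · exact Finset.mem_filter.2 ⟨hsub hmF, le_refl m, by linarith⟩
    · intro x hx y hy
      rw [Finset.mem_filter] at hx hy
      rw [abs_le]; constructor <;> linarith [hx.2.1, hx.2.2, hy.2.1, hy.2.2]
  have hFS : F ⊆ X.filter (fun x => m ≤ x ∧ x ≤ m + ε) := by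
    intro x hx
    refine Finset.mem_filter.2 ⟨hsub hx, F.min'_le x hx, ?_⟩
    have := hdiam x hx m hmF
    rw [abs_le] at this; linarith [this.1, this.2]
  exact (hmax _ hS hFS).symm

/-- Facets of `VR_ε(X)` are uniquely determined by their minimal elements. -/
theorem facet_eq_of_min_eq (X : Finset ℝ) (ε : ℝ) (hε : 0 < ε)
    (F G : Finset ℝ) (hF : IsVRFacet X ε F) (hG : IsVRFacet X ε G)
    (hmin : G.min' hG.1.1 = F.min' hF.1.1) : G = F := by
  rw [facet_eq_slab X ε hε F hF, facet_eq_slab X ε hε G hG, hmin]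
end

section
/- Let X be a finite subset of ℝ and ε > 0. The map sending each facet F of VR_ε(X) to min(F) is an injection from the set of facets into X, and the induced linear order on facets (F ≤ G iff min(F) ≤ min(G)) is a total order on the set of facets. -/
/-- A facet equals the set of points of `X` in the window `[min σ, min σ + ε]`. -/
lemma facet_eq_window (X : Finset ℝ) (ε : ℝ) (hε : 0 < ε) (σ : Finset ℝ)
    (h : IsVRFacet X ε σ) :
    σ = X.filter (fun x => σ.min' h.1.1 ≤ x ∧ x ≤ σ.min' h.1.1 + ε) := by
  obtain ⟨⟨hne, hsub, hdiam⟩, hmax⟩ := h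
  set m := σ.min' hne with hm
  have hmmem : m ∈ σ := σ.min'_mem hne
  refine (hmax _ ?_ ?_).symm
  · refine ⟨⟨m, ?_⟩, Finset.filter_subset _ _, ?_⟩
    · simp [Finset.mem_filter, hsub hmmem, le_refl, hε.le]
    · intro x hx y hy
      simp only [Finset.mem_filter] at hx hy
      rw [abs_le]; constructor <;> linarith [hx.2.1, hx.2.2, hy.2.1, hy.2.2]
  · intro x hx
    have h1 : m ≤ x := Finset.min'_le _ _ hx
    have h2 : |x - m| ≤ ε := hdiam x hx m hmmem
    rw [abs_le] at h2
    simp only [Finset.mem_filter]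
    exact ⟨hsub hx, h1, by linarith [h2.1, h2.2]⟩

/-- The map sending a facet to its minimal element is an injection into `X`,
and the induced order `F ≤ G ↔ min F ≤ min G` is a linear (total) order on facets. -/
theorem facet_min_injective_and_linearOrder (X : Finset ℝ) (ε : ℝ) (hε : 0 < ε) :
    Function.Injective
      (fun F : {σ : Finset ℝ // IsVRFacet X ε σ} => F.1.min' F.2.1.1) ∧
    (∀ F : {σ : Finset ℝ // IsVRFacet X ε σ}, F.1.min' F.2.1.1 ∈ X) ∧
    IsLinearOrder {σ : Finset ℝ // IsVRFacet X ε σ}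
      (fun F G => F.1.min' F.2.1.1 ≤ G.1.min' G.2.1.1) := by
  have hinj : Function.Injective
      (fun F : {σ : Finset ℝ // IsVRFacet X ε σ} => F.1.min' F.2.1.1) := by
    intro F G h
    simp only at h
    apply Subtype.ext
    rw [facet_eq_window X ε hε F.1 F.2, facet_eq_window X ε hε G.1 G.2, h]
  refine ⟨hinj, fun F => F.2.1.2.1 (F.1.min'_mem F.2.1.1), ?_⟩
  exact { refl := fun _ => le_refl _
          trans := fun _ _ _ h1 h2 => le_trans h1 h2
          antisymm := fun _ _ h1 h2 => hinj (le_antisymm h1 h2)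
          total := fun _ _ => le_total _ _ }
end

section
/- Let X be a finite subset of ℝ and ε > 0. Let F and G be two distinct facets of VR_ε(X) with min(F) < min(G). Then the intersection F ∩ G is either empty or is itself a simplex of VR_ε(X) contained in the interval [min(G), min(F) + ε]; in particular, F ∩ G has diameter at most ε. -/
/-- For distinct facets `F`, `G` with `min F < min G`, the intersection `F ∩ G`
is empty or a simplex of `VR_ε(X)` contained in `[min G, min F + ε]`; in particular
it has diameter at most `ε`. -/
theorem facet_inter_empty_or_simplex (X : Finset ℝ) (ε : ℝ) (hε : 0 < ε)
    (F G : Finset ℝ) (hF : IsVRFacet X ε F) (hG : IsVRFacet X ε G)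
    (hne : F ≠ G) (hlt : F.min' hF.1.1 < G.min' hG.1.1) :
    ((F ∩ G).Nonempty →
      IsVRSimplex X ε (F ∩ G) ∧
      ∀ x ∈ F ∩ G, x ∈ Set.Icc (G.min' hG.1.1) (F.min' hF.1.1 + ε)) ∧
    (∀ x ∈ F ∩ G, ∀ y ∈ F ∩ G, |x - y| ≤ ε) := by
  obtain ⟨⟨hFne, hFX, hFd⟩, _⟩ := hF
  obtain ⟨⟨hGne, hGX, hGd⟩, _⟩ := hG
  have key : ∀ x ∈ F ∩ G, ∀ y ∈ F ∩ G, |x - y| ≤ ε := fun x hx y hy =>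
    hFd x (Finset.mem_inter.1 hx).1 y (Finset.mem_inter.1 hy).1
  refine ⟨fun hne' => ⟨⟨hne', fun x hx => hFX (Finset.mem_inter.1 hx).1, key⟩, ?_⟩, key⟩
  intro x hx
  obtain ⟨hxF, hxG⟩ := Finset.mem_inter.1 hx
  constructor
  · exact Finset.min'_le G x hxG
  · have := hFd x hxF (F.min' hFne) (F.min'_mem hFne)
    have := abs_le.1 this
    linarith [this.1, this.2]
end

section
/- Let X ⊆ ℝ be a finite set and 0 < ε ≤ ε'. Then VR_ε(X) ⊆ VR_{ε'}(X), and for every q ≥ 1 the map on q-th homology induced by inclusion, H_q(VR_ε(X)) → H_q(VR_{ε'}(X)), is the zero map; consequently all persistent Betti numbers β_q^{ε,ε'} vanish for q ≥ 1. -/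
open Finset

/-- The `q`-dimensional simplices of the Vietoris–Rips complex `VR_ε(X)` on a finite
set `X ⊆ ℝ`: subsets of `X` with `q + 1` elements and diameter at most `ε`. -/
def VRSimp (X : Finset ℝ) (ε : ℝ) (q : ℕ) : Type :=
  {σ : Finset ℝ // σ ⊆ X ∧ σ.card = q + 1 ∧ ∀ x ∈ σ, ∀ y ∈ σ, |x - y| ≤ ε}

/-- The space of simplicial `q`-chains of `VR_ε(X)` with coefficients in `k`. -/
abbrev VRChain (k : Type) [Field k] (X : Finset ℝ) (ε : ℝ) (q : ℕ) : Type :=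
  VRSimp X ε q →₀ k

/-- The `i`-th face of a `(q+1)`-simplex: remove the `i`-th smallest vertex. -/
noncomputable def VRFace {X : Finset ℝ} {ε : ℝ} {q : ℕ} (σ : VRSimp X ε (q + 1)) (i : Fin (q + 2)) :
    VRSimp X ε q :=
  ⟨σ.1.erase (σ.1.orderEmbOfFin σ.2.2.1 i),
    fun x hx => σ.2.1 (Finset.mem_of_mem_erase hx),
    by
      have h := Finset.card_erase_of_mem (Finset.orderEmbOfFin_mem σ.1 σ.2.2.1 i)
      have h2 := σ.2.2.1
      omega,
    fun x hx y hy => σ.2.2.2 x (Finset.mem_of_mem_erase hx) y (Finset.mem_of_mem_erase hy)⟩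

/-- The simplicial boundary map `∂ : C_{q+1} → C_q` with the usual alternating signs,
using the linear order on the vertices (which lie in `ℝ`). -/
noncomputable def VRBoundary (k : Type) [Field k] (X : Finset ℝ) (ε : ℝ) (q : ℕ) :
    VRChain k X ε (q + 1) →ₗ[k] VRChain k X ε q :=
  Finsupp.lsum k fun σ =>
    LinearMap.toSpanSingleton k (VRChain k X ε q)
      (∑ i : Fin (q + 2), (-1 : k) ^ (i : ℕ) • Finsupp.single (VRFace σ i) (1 : k))

/-- The `(q+1)`-cycles of `VR_ε(X)`. -/
noncomputable def VRCycles (k : Type) [Field k] (X : Finset ℝ) (ε : ℝ) (q : ℕ) :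
    Submodule k (VRChain k X ε (q + 1)) :=
  LinearMap.ker (VRBoundary k X ε q)

/-- The `(q+1)`-boundaries of `VR_ε(X)`. -/
noncomputable def VRBoundaries (k : Type) [Field k] (X : Finset ℝ) (ε : ℝ) (q : ℕ) :
    Submodule k (VRChain k X ε (q + 1)) :=
  LinearMap.range (VRBoundary k X ε (q + 1))


/-- The inclusion of simplices of `VR_ε(X)` into simplices of `VR_ε'(X)` for `ε ≤ ε'`. -/
def VRSimpInc (X : Finset ℝ) {ε ε' : ℝ} (h : ε ≤ ε') (q : ℕ) (σ : VRSimp X ε q) :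
    VRSimp X ε' q :=
  ⟨σ.1, σ.2.1, σ.2.2.1, fun x hx y hy => (σ.2.2.2 x hx y hy).trans h⟩

/-!
Let `σ` be a simplex of `VR_ε(X)` with first vertex `m`, and let its apex `a` be the largest
point of `X` in `[m, m + ε]`; then `σ ∪ {a}` is again a simplex. If `σ` has positive dimension
and misses `a`, it is a face of the cone `σ ∪ {a}`, whose other faces either contain their own
apex or start further right. Inducting on the first vertex from the right, every chain is thus
homologous to one supported on simplices containing their apex. Such a chain is never a nonzero
cycle: if `σ` has the leftmost first vertex in its support, the face `σ \ {a}` occurs in the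
boundary of no other simplex of the support. So every cycle of positive degree already bounds in
`VR_ε(X)`, hence in `VR_ε'(X)`.
-/

open Finsupp

theorem Finsupp.single_one_mem_of_apply_ne_zero {α k : Type*} [DivisionRing k]
    {M : Submodule k (α →₀ k)} {c : α →₀ k} {a : α} (hc : c ∈ M) (ha : c a ≠ 0)
    (hM : ∀ b ∈ c.support, b ≠ a → single b 1 ∈ M) : single a 1 ∈ M := by
  classical
  have herase : c.erase a ∈ M := by
    have hsupp : c.erase a ∈ supported k k (↑(c.support.erase a) : Set α) := by
      rw [mem_supported, support_erase]
    rw [supported_eq_span_single] at hsupp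
    refine Submodule.span_le.2 ?_ hsupp
    rintro _ ⟨b, hb, rfl⟩
    exact hM b (Finset.mem_of_mem_erase hb) (Finset.ne_of_mem_erase hb)
  have hsingle : single a (c a) ∈ M := by
    rw [eq_sub_of_add_eq (single_add_erase a c)]
    exact M.sub_mem hc herase
  simpa [smul_single, inv_mul_cancel₀ ha] using M.smul_mem (c a)⁻¹ hsingle

theorem Finsupp.top_le_of_forall_single_one_mem {α k : Type*} [Semiring k]
    {M : Submodule k (α →₀ k)} (hM : ∀ a, single a 1 ∈ M) : ⊤ ≤ M := by
  rw [← supported_univ, supported_eq_span_single, Submodule.span_le]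
  rintro _ ⟨a, -, rfl⟩
  exact hM a

section numBelow

variable {α : Type*} [LinearOrder α]

def numBelow (s : Finset α) (x : α) : ℕ := (s.filter (· < x)).card

theorem numBelow_orderEmbOfFin (s : Finset α) {n : ℕ} (h : s.card = n) (i : Fin n) :
    numBelow s (s.orderEmbOfFin h i) = i := by
  have hfilter :
      s.filter (· < s.orderEmbOfFin h i) = (Finset.Iio i).map (s.orderEmbOfFin h).toEmbedding := by
    ext x
    simp only [Finset.mem_filter, Finset.mem_map, Finset.mem_Iio, RelEmbedding.coe_toEmbedding]
    constructor
    · rintro ⟨hx, hlt⟩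
      obtain ⟨j, rfl⟩ : x ∈ Set.range (s.orderEmbOfFin h) := by
        rwa [Finset.range_orderEmbOfFin]
      exact ⟨j, (s.orderEmbOfFin h).lt_iff_lt.1 hlt, rfl⟩
    · rintro ⟨j, hj, rfl⟩
      exact ⟨s.orderEmbOfFin_mem h j, (s.orderEmbOfFin h).strictMono hj⟩
  rw [numBelow, hfilter, Finset.card_map, Fin.card_Iio]

theorem numBelow_erase_add_one {s : Finset α} {x y : α} (hx : x ∈ s) (h : x < y) :
    numBelow (s.erase x) y + 1 = numBelow s y := by
  rw [numBelow, numBelow, Finset.filter_erase, Finset.card_erase_add_one (by simp [hx, h])]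

theorem numBelow_erase_of_le {s : Finset α} {x y : α} (h : y ≤ x) :
    numBelow (s.erase x) y = numBelow s y := by
  rw [numBelow, numBelow, Finset.filter_erase, Finset.erase_eq_of_notMem (by simp [h])]

theorem neg_one_pow_numBelow_erase_add {k : Type*} [Ring k] {s : Finset α} {x y : α}
    (hx : x ∈ s) (h : x < y) :
    (-1 : k) ^ (numBelow s x + numBelow (s.erase x) y)
      + (-1 : k) ^ (numBelow s y + numBelow (s.erase y) x) = 0 := by
  rw [← numBelow_erase_add_one hx h, numBelow_erase_of_le h.le,
    add_right_comm (numBelow (s.erase x) y), add_comm (numBelow (s.erase x) y), pow_succ,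
    mul_neg_one, add_neg_cancel]

/-- The two ways of deleting two vertices from a simplex contribute opposite signs, so the
double boundary vanishes coefficientwise. -/
theorem sum_sum_erase_neg_one_pow_eq_zero (k : Type*) [Ring k] (s t : Finset α) :
    ∑ x ∈ s, ∑ y ∈ s.erase x, (if (s.erase x).erase y = t
      then (-1 : k) ^ (numBelow s x + numBelow (s.erase x) y) else 0) = 0 := by
  rw [Finset.sum_sigma']
  refine Finset.sum_involution (fun p _ => ⟨p.2, p.1⟩) ?_ ?_ ?_ (fun _ _ => rfl)
  · rintro ⟨x, y⟩ hp
    simp only [Finset.mem_sigma, Finset.mem_erase] at hp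
    obtain ⟨hx, hyx, hy⟩ := hp
    simp only [Finset.erase_right_comm (a := x) (b := y)]
    split_ifs
    · rcases lt_or_gt_of_ne hyx with hlt | hlt
      · rw [add_comm]; exact neg_one_pow_numBelow_erase_add hy hlt
      · exact neg_one_pow_numBelow_erase_add hx hlt
    · exact add_zero 0
  · rintro ⟨x, y⟩ hp - h
    simp only [Finset.mem_sigma, Finset.mem_erase] at hp
    exact hp.2.1 (congrArg Sigma.fst h)
  · rintro ⟨x, y⟩ hp
    simp only [Finset.mem_sigma, Finset.mem_erase] at hp ⊢
    exact ⟨hp.2.2, hp.2.1.symm, hp.1⟩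

end numBelow

section farthestWithin

variable {X : Finset ℝ} {ε m : ℝ}

noncomputable def farthestWithin (X : Finset ℝ) (ε m : ℝ) : ℝ :=
  (insert m (X.filter (· ≤ m + ε))).max' (Finset.insert_nonempty _ _)

theorem farthestWithin_mem (hm : m ∈ X) : farthestWithin X ε m ∈ X := by
  have := Finset.max'_mem (insert m (X.filter (· ≤ m + ε))) (Finset.insert_nonempty _ _)
  rcases Finset.mem_insert.1 this with h | h
  · rw [farthestWithin, h]; exact hm
  · exact (Finset.mem_filter.1 h).1

theorem self_le_farthestWithin : m ≤ farthestWithin X ε m :=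
  Finset.le_max' _ _ (Finset.mem_insert_self _ _)

theorem le_farthestWithin {x : ℝ} (hx : x ∈ X) (hxm : x ≤ m + ε) :
    x ≤ farthestWithin X ε m :=
  Finset.le_max' _ _ (Finset.mem_insert_of_mem (Finset.mem_filter.2 ⟨hx, hxm⟩))

theorem farthestWithin_le (hε : 0 ≤ ε) : farthestWithin X ε m ≤ m + ε := by
  refine Finset.max'_le _ _ _ fun x hx => ?_
  rcases Finset.mem_insert.1 hx with rfl | hx
  · linarith
  · exact (Finset.mem_filter.1 hx).2

end farthestWithin

namespace VRSimp

variable {X : Finset ℝ} {ε : ℝ} {q : ℕ}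

theorem ext_iff {σ τ : VRSimp X ε q} : σ = τ ↔ σ.1 = τ.1 := Subtype.ext_iff

theorem nonempty (σ : VRSimp X ε q) : σ.1.Nonempty :=
  Finset.card_pos.1 (by rw [σ.2.2.1]; exact q.succ_pos)

theorem nonneg (σ : VRSimp X ε q) : 0 ≤ ε := by
  obtain ⟨x, hx⟩ := σ.nonempty
  simpa using σ.2.2.2 x hx x hx

noncomputable def minVertex (σ : VRSimp X ε q) : ℝ := σ.1.min' σ.nonempty

theorem minVertex_mem (σ : VRSimp X ε q) : σ.minVertex ∈ σ.1 := Finset.min'_mem _ _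

theorem minVertex_le (σ : VRSimp X ε q) {x : ℝ} (hx : x ∈ σ.1) : σ.minVertex ≤ x :=
  Finset.min'_le _ _ hx

theorem le_minVertex_add (σ : VRSimp X ε q) {x : ℝ} (hx : x ∈ σ.1) :
    x ≤ σ.minVertex + ε := by
  linarith [(abs_sub_le_iff.1 (σ.2.2.2 x hx _ σ.minVertex_mem)).1]

theorem minVertex_eq_of_mem {σ : VRSimp X ε q} {m : ℝ} (hm : m ∈ σ.1)
    (hle : ∀ x ∈ σ.1, m ≤ x) : σ.minVertex = m :=
  le_antisymm (σ.minVertex_le hm) (hle _ σ.minVertex_mem)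

noncomputable def height (σ : VRSimp X ε q) : ℕ := (X.filter (σ.minVertex < ·)).card

theorem height_lt_of_minVertex_lt {q' : ℕ} {σ : VRSimp X ε q} {ρ : VRSimp X ε q'}
    (h : σ.minVertex < ρ.minVertex) : ρ.height < σ.height := by
  refine Finset.card_lt_card (Finset.ssubset_iff_of_subset ?_ |>.2 ⟨ρ.minVertex, ?_, ?_⟩)
  · exact Finset.monotone_filter_right _ fun _ _ hx => h.trans hx
  · exact Finset.mem_filter.2 ⟨ρ.2.1 ρ.minVertex_mem, h⟩
  · simp

noncomputable def apex (σ : VRSimp X ε q) : ℝ := farthestWithin X ε σ.minVertex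

def ContainsApex (σ : VRSimp X ε q) : Prop := σ.apex ∈ σ.1

theorem apex_mem_X (σ : VRSimp X ε q) : σ.apex ∈ X :=
  farthestWithin_mem (σ.2.1 σ.minVertex_mem)

theorem minVertex_lt_apex (σ : VRSimp X ε (q + 1)) : σ.minVertex < σ.apex := by
  obtain ⟨y, hy, hym⟩ := Finset.exists_mem_ne (by rw [σ.2.2.1]; omega) σ.minVertex
  exact ((σ.minVertex_le hy).lt_of_ne' hym).trans_le
    (le_farthestWithin (σ.2.1 hy) (σ.le_minVertex_add hy))

theorem mem_insert_apex_bounds (σ : VRSimp X ε q) {x : ℝ} (hx : x ∈ insert σ.apex σ.1) :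
    σ.minVertex ≤ x ∧ x ≤ σ.minVertex + ε := by
  rcases Finset.mem_insert.1 hx with rfl | hx
  · exact ⟨self_le_farthestWithin, farthestWithin_le σ.nonneg⟩
  · exact ⟨σ.minVertex_le hx, σ.le_minVertex_add hx⟩

noncomputable def cone (σ : VRSimp X ε q) (hσ : ¬σ.ContainsApex) : VRSimp X ε (q + 1) :=
  ⟨insert σ.apex σ.1, Finset.insert_subset σ.apex_mem_X σ.2.1,
    by rw [Finset.card_insert_of_notMem hσ, σ.2.2.1],
    fun x hx y hy => by
      obtain ⟨hx₁, hx₂⟩ := σ.mem_insert_apex_bounds hx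
      obtain ⟨hy₁, hy₂⟩ := σ.mem_insert_apex_bounds hy
      exact abs_sub_le_iff.2 ⟨by linarith, by linarith⟩⟩

theorem cone_val (σ : VRSimp X ε q) (hσ : ¬σ.ContainsApex) :
    (σ.cone hσ).1 = insert σ.apex σ.1 := rfl

noncomputable def erase (σ : VRSimp X ε (q + 1)) (x : σ.1) : VRSimp X ε q :=
  ⟨σ.1.erase x, (Finset.erase_subset _ _).trans σ.2.1,
    by rw [Finset.card_erase_of_mem x.2, σ.2.2.1]; rfl,
    fun a ha b hb => σ.2.2.2 a (Finset.mem_of_mem_erase ha) b (Finset.mem_of_mem_erase hb)⟩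

@[simp]
theorem erase_val (σ : VRSimp X ε (q + 1)) (x : σ.1) : (σ.erase x).1 = σ.1.erase x := rfl

end VRSimp

section boundary

variable {k : Type} [Field k] {X : Finset ℝ} {ε : ℝ} {q : ℕ}

theorem VRBoundary_single_one (σ : VRSimp X ε (q + 1)) :
    VRBoundary k X ε q (single σ 1) =
      ∑ x : σ.1, (-1 : k) ^ numBelow σ.1 x • single (σ.erase x) 1 := by
  rw [VRBoundary, lsum_single, LinearMap.toSpanSingleton_apply, one_smul]
  refine Fintype.sum_equiv (σ.1.orderIsoOfFin σ.2.2.1).toEquiv _ _ fun i => ?_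
  rw [← numBelow_orderEmbOfFin σ.1 σ.2.2.1 i]
  rfl

theorem VRBoundary_single_one_apply (σ : VRSimp X ε (q + 1)) (τ : VRSimp X ε q) :
    VRBoundary k X ε q (single σ 1) τ =
      ∑ x ∈ σ.1, if σ.1.erase x = τ.1 then (-1 : k) ^ numBelow σ.1 x else 0 := by
  rw [VRBoundary_single_one, finsetSum_apply, ← Finset.sum_coe_sort σ.1]
  refine Finset.sum_congr rfl fun x _ => ?_
  classical
  simp only [Finsupp.smul_apply, single_apply, VRSimp.ext_iff, VRSimp.erase_val, smul_eq_mul,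
    mul_ite, mul_one, mul_zero]

theorem VRBoundary_single_one_apply_erase (σ : VRSimp X ε (q + 1)) (x : σ.1) :
    VRBoundary k X ε q (single σ 1) (σ.erase x) = (-1 : k) ^ numBelow σ.1 x := by
  rw [VRBoundary_single_one_apply, Finset.sum_eq_single_of_mem _ x.2,
    if_pos (σ.erase_val x).symm]
  intro y hy hyx
  exact if_neg fun h => hyx ((Finset.erase_inj σ.1 hy).1 (h.trans (σ.erase_val x)))

theorem exists_erase_eq_of_VRBoundary_single_one_apply_ne_zero {σ : VRSimp X ε (q + 1)}
    {τ : VRSimp X ε q} (h : VRBoundary k X ε q (single σ 1) τ ≠ 0) :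
    ∃ x ∈ σ.1, σ.1.erase x = τ.1 := by
  rw [VRBoundary_single_one_apply] at h
  obtain ⟨x, hx, hne⟩ := Finset.exists_ne_zero_of_sum_ne_zero h
  exact ⟨x, hx, by_contra fun hc => hne (if_neg hc)⟩

theorem VRBoundary_apply (z : VRChain k X ε (q + 1)) (τ : VRSimp X ε q) :
    VRBoundary k X ε q z τ = z.sum fun σ a => a * VRBoundary k X ε q (single σ 1) τ := by
  conv_lhs => rw [← z.sum_single]
  rw [map_finsuppSum, Finsupp.sum_apply]
  refine sum_congr fun σ _ => ?_
  rw [← smul_eq_mul, ← Finsupp.smul_apply, ← map_smul, smul_single, smul_eq_mul, mul_one]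

theorem VRBoundary_VRBoundary_single_one (σ : VRSimp X ε (q + 2)) :
    VRBoundary k X ε q (VRBoundary k X ε (q + 1) (single σ 1)) = 0 := by
  ext τ
  rw [VRBoundary_single_one, map_sum, finsetSum_apply, Finsupp.coe_zero, Pi.zero_apply]
  convert sum_sum_erase_neg_one_pow_eq_zero k σ.1 τ.1 using 1
  rw [← Finset.sum_coe_sort σ.1]
  refine Finset.sum_congr rfl fun x _ => ?_
  rw [map_smul, Finsupp.smul_apply, VRBoundary_single_one_apply, smul_eq_mul, Finset.mul_sum]
  refine Finset.sum_congr rfl fun y _ => ?_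
  rw [mul_ite, mul_zero, ← pow_add]
  rfl

theorem VRBoundary_comp_VRBoundary :
    VRBoundary k X ε q ∘ₗ VRBoundary k X ε (q + 1) = 0 :=
  lhom_ext' fun σ => LinearMap.ext_ring (VRBoundary_VRBoundary_single_one σ)

theorem VRBoundaries_le_VRCycles : VRBoundaries k X ε q ≤ VRCycles k X ε q :=
  LinearMap.range_le_ker_iff.2 VRBoundary_comp_VRBoundary

theorem VRBoundary_mapDomain {ε' : ℝ} (h : ε ≤ ε') (z : VRChain k X ε (q + 1)) :
    VRBoundary k X ε' q (mapDomain (VRSimpInc X h (q + 1)) z) =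
      mapDomain (VRSimpInc X h q) (VRBoundary k X ε q z) := by
  induction z using Finsupp.induction_linear with
  | zero => simp
  | add f g hf hg => rw [mapDomain_add, map_add, map_add, mapDomain_add, hf, hg]
  | single σ a =>
    simp only [mapDomain_single, VRBoundary, lsum_single, LinearMap.toSpanSingleton_apply,
      mapDomain_smul, mapDomain_finsetSum]
    rfl

end boundary

section acyclic

variable {k : Type} [Field k] {X : Finset ℝ} {ε : ℝ} {q : ℕ}

noncomputable def apexChains (k : Type) [Field k] (X : Finset ℝ) (ε : ℝ) (q : ℕ) :
    Submodule k (VRChain k X ε (q + 1)) :=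
  supported k k {σ | σ.ContainsApex}

theorem VRBoundary_single_cone_apply_self_ne_zero (σ : VRSimp X ε (q + 1))
    (hσ : ¬σ.ContainsApex) :
    VRBoundary k X ε (q + 1) (single (σ.cone hσ) 1) σ ≠ 0 := by
  obtain ⟨x, hx⟩ : ∃ x : (σ.cone hσ).1, (σ.cone hσ).erase x = σ :=
    ⟨⟨σ.apex, Finset.mem_insert_self _ _⟩, VRSimp.ext_iff.2 (Finset.erase_insert hσ)⟩
  have hcoeff := VRBoundary_single_one_apply_erase (k := k) (σ.cone hσ) x
  rw [hx] at hcoeff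
  exact hcoeff ▸ pow_ne_zero _ (neg_ne_zero.2 one_ne_zero)

theorem containsApex_or_height_lt_of_VRBoundary_single_cone_apply_ne_zero
    {σ ρ : VRSimp X ε (q + 1)} (hσ : ¬σ.ContainsApex)
    (hρ : VRBoundary k X ε (q + 1) (single (σ.cone hσ) 1) ρ ≠ 0) (hne : ρ ≠ σ) :
    ρ.ContainsApex ∨ ρ.height < σ.height := by
  obtain ⟨x, hx, hρx⟩ := exists_erase_eq_of_VRBoundary_single_one_apply_ne_zero hρ
  rw [VRSimp.cone_val] at hx hρx
  have hxv : x ≠ σ.apex := by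
    rintro rfl
    exact hne (VRSimp.ext_iff.2 (hρx.symm.trans (Finset.erase_insert hσ)))
  have hbounds : ∀ y ∈ ρ.1, σ.minVertex ≤ y := fun y hy =>
    (σ.mem_insert_apex_bounds (Finset.mem_of_mem_erase (hρx ▸ hy))).1
  by_cases hxm : x = σ.minVertex
  · right
    refine VRSimp.height_lt_of_minVertex_lt ((hbounds _ ρ.minVertex_mem).lt_of_ne' fun h => ?_)
    have := ρ.minVertex_mem
    rw [h, ← hρx, hxm] at this
    exact Finset.notMem_erase _ _ this
  · left
    have hmρ : σ.minVertex ∈ ρ.1 :=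
      hρx ▸ Finset.mem_erase.2 ⟨Ne.symm hxm, Finset.mem_insert_of_mem σ.minVertex_mem⟩
    have hmin : ρ.minVertex = σ.minVertex := VRSimp.minVertex_eq_of_mem hmρ hbounds
    change farthestWithin X ε ρ.minVertex ∈ ρ.1
    rw [hmin, ← hρx]
    exact Finset.mem_erase.2 ⟨Ne.symm hxv, Finset.mem_insert_self _ _⟩

theorem single_one_mem_apexChains_sup_VRBoundaries (σ : VRSimp X ε (q + 1)) :
    single σ 1 ∈ apexChains k X ε q ⊔ VRBoundaries k X ε q := by
  induction hn : σ.height using Nat.strong_induction_on generalizing σ with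
  | _ n ih =>
  by_cases hσ : σ.ContainsApex
  · exact Submodule.mem_sup_left (single_mem_supported k 1 hσ)
  refine Finsupp.single_one_mem_of_apply_ne_zero
    (Submodule.mem_sup_right (LinearMap.mem_range_self _ (single (σ.cone hσ) 1)))
    (VRBoundary_single_cone_apply_self_ne_zero σ hσ) fun ρ hρ hne => ?_
  rcases containsApex_or_height_lt_of_VRBoundary_single_cone_apply_ne_zero hσ
    (Finsupp.mem_support_iff.1 hρ) hne with hρ' | hlt
  · exact Submodule.mem_sup_left (single_mem_supported k 1 hρ')
  · exact ih _ (hn ▸ hlt) ρ rfl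

theorem eq_of_VRBoundary_single_one_apply_erase_apex_ne_zero {σ ρ : VRSimp X ε (q + 1)}
    (hσ : σ.ContainsApex) (hρ : ρ.ContainsApex) (hle : σ.minVertex ≤ ρ.minVertex)
    (h : VRBoundary k X ε q (single ρ 1) (σ.erase ⟨σ.apex, hσ⟩) ≠ 0) : ρ = σ := by
  obtain ⟨x, hx, hρx⟩ := exists_erase_eq_of_VRBoundary_single_one_apply_ne_zero h
  rw [VRSimp.erase_val] at hρx
  have hmρ : σ.minVertex ∈ ρ.1 := Finset.mem_of_mem_erase (hρx ▸ Finset.mem_erase.2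
    ⟨σ.minVertex_lt_apex.ne, σ.minVertex_mem⟩)
  have hmin : ρ.minVertex = σ.minVertex := le_antisymm (ρ.minVertex_le hmρ) hle
  have hapex : ρ.apex = σ.apex := by rw [VRSimp.apex, hmin]; rfl
  have hxv : x = σ.apex := by
    by_contra hxv
    have : σ.apex ∈ ρ.1.erase x := Finset.mem_erase.2 ⟨Ne.symm hxv, hapex ▸ hρ⟩
    rw [hρx] at this
    exact Finset.notMem_erase _ _ this
  rw [VRSimp.ext_iff, ← Finset.insert_erase hx, hρx, hxv, Finset.insert_erase hσ]

theorem eq_zero_of_mem_apexChains {z : VRChain k X ε (q + 1)} (hz : z ∈ apexChains k X ε q)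
    (hcyc : VRBoundary k X ε q z = 0) : z = 0 := by
  by_contra hne
  obtain ⟨σ, hσ, hmin⟩ :=
    z.support.exists_min_image VRSimp.minVertex (Finsupp.support_nonempty_iff.2 hne)
  have hsupp : ∀ ρ ∈ z.support, ρ.ContainsApex := fun ρ hρ => (mem_supported k z).1 hz hρ
  have hcoeff : VRBoundary k X ε q z (σ.erase ⟨σ.apex, hsupp σ hσ⟩) = 0 := by
    rw [hcyc]; rfl
  rw [VRBoundary_apply, Finsupp.sum, Finset.sum_eq_single σ,
    VRBoundary_single_one_apply_erase] at hcoeff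
  · exact mul_ne_zero (Finsupp.mem_support_iff.1 hσ)
      (pow_ne_zero _ (neg_ne_zero.2 one_ne_zero)) hcoeff
  · intro ρ hρ hρσ
    by_contra h
    exact hρσ (eq_of_VRBoundary_single_one_apply_erase_apex_ne_zero (hsupp σ hσ) (hsupp ρ hρ)
      (hmin ρ hρ) (right_ne_zero_of_mul h))
  · exact fun h => absurd hσ h

theorem VRCycles_le_VRBoundaries : VRCycles k X ε q ≤ VRBoundaries k X ε q := by
  intro z hz
  obtain ⟨g, hg, b, hb, rfl⟩ := Submodule.mem_sup.1
    (Finsupp.top_le_of_forall_single_one_mem single_one_mem_apexChains_sup_VRBoundaries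
      (Submodule.mem_top (x := z)))
  have hgcyc : VRBoundary k X ε q g = 0 := by
    have hbcyc : VRBoundary k X ε q b = 0 := VRBoundaries_le_VRCycles hb
    rwa [VRCycles, LinearMap.mem_ker, map_add, hbcyc, add_zero] at hz
  rw [eq_zero_of_mem_apexChains hg hgcyc, zero_add]
  exact hb

end acyclic

theorem VR_persistent_homology_zero_general (k : Type) [Field k] (X : Finset ℝ)
    (ε ε' : ℝ) (h : ε ≤ ε') :
    (∀ σ : Finset ℝ, IsVRSimplex X ε σ → IsVRSimplex X ε' σ) ∧
    (∀ q : ℕ, ∀ z : VRChain k X ε (q + 1), z ∈ VRCycles k X ε q →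
      Finsupp.mapDomain (VRSimpInc X h (q + 1)) z ∈ VRBoundaries k X ε' q) := by
  refine ⟨fun σ ⟨hne, hX, hdiam⟩ =>
    ⟨hne, hX, fun x hx y hy => (hdiam x hx y hy).trans h⟩, fun q z hz => ?_⟩
  obtain ⟨w, rfl⟩ := VRCycles_le_VRBoundaries hz
  exact ⟨mapDomain (VRSimpInc X h (q + 2)) w, VRBoundary_mapDomain h w⟩

/-- For `0 < ε ≤ ε'`, `VR_ε(X) ⊆ VR_ε'(X)`, and the inclusion-induced map on homology
in every degree `q + 1 ≥ 1` is the zero map: each cycle of `VR_ε(X)` is mapped to a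
boundary of `VR_ε'(X)`. Consequently, all persistent Betti numbers `β_q^{ε,ε'}` vanish
for `q ≥ 1`. -/
theorem VR_persistent_homology_zero (k : Type) [Field k] (X : Finset ℝ)
    (ε ε' : ℝ) (hε : 0 < ε) (h : ε ≤ ε') :
    (∀ σ : Finset ℝ, IsVRSimplex X ε σ → IsVRSimplex X ε' σ) ∧
    (∀ q : ℕ, ∀ z : VRChain k X ε (q + 1), z ∈ VRCycles k X ε q →
      Finsupp.mapDomain (VRSimpInc X h (q + 1)) z ∈ VRBoundaries k X ε' q) :=
  VR_persistent_homology_zero_general k X ε ε' h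
end
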